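/- arXiv:2208.11200 — 3 statements merged into one kernel-verified Lean document; each statement's English description precedes it below -/
import Mathlib

section
/- Hierarchical structure of FirmCores: for every integer k ≥ 0 and integer λ with 1 ≤ λ ≤ |L|, the (k+1,λ)-FirmCore of G is a subset of the (k,λ)-FirmCore of G, and (when λ+1 ≤ |L|) the (k,λ+1)-FirmCore of G is a subset of the (k,λ)-FirmCore of G. -/
open Finset

/-- Degree of `v` in the subgraph of layer `ℓ` induced by the vertex set `S`. -/
def degS {V L : Type*} (G : L → SimpleGraph V) [∀ ℓ, DecidableRel (G ℓ).Adj]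
    (S : Finset V) (ℓ : L) (v : V) : ℕ :=
  (S.filter fun u => (G ℓ).Adj v u).card

/-- `S` satisfies the `(k,λ)`-FirmCore property: every vertex of `S` has, in at least
`λ` layers, at least `k` neighbors inside `S`. -/
def FCProp {V L : Type*} [Fintype L] (G : L → SimpleGraph V)
    [∀ ℓ, DecidableRel (G ℓ).Adj] (k lam : ℕ) (S : Finset V) : Prop :=
  ∀ v ∈ S, lam ≤ (univ.filter fun ℓ : L => k ≤ degS G S ℓ v).card

/-- `C` is the `(k,λ)`-FirmCore: it satisfies the FirmCore property and is maximal
(under set inclusion) among such sets. -/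
def IsFirmCore {V L : Type*} [Fintype L] (G : L → SimpleGraph V)
    [∀ ℓ, DecidableRel (G ℓ).Adj] (k lam : ℕ) (C : Finset V) : Prop :=
  FCProp G k lam C ∧ ∀ S : Finset V, FCProp G k lam S → C ⊆ S → S = C

/-! The FirmCore property is closed under unions, so a maximal set with the property contains
every set with it; and it is antitone in `k` and `λ`. -/

lemma degS_mono {V L : Type*} (G : L → SimpleGraph V) [∀ ℓ, DecidableRel (G ℓ).Adj]
    {S T : Finset V} (h : S ⊆ T) (ℓ : L) (v : V) : degS G S ℓ v ≤ degS G T ℓ v :=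
  card_le_card (filter_subset_filter _ h)

section FCProp

variable {V L : Type*} [Fintype L] (G : L → SimpleGraph V) [∀ ℓ, DecidableRel (G ℓ).Adj]

lemma card_filter_le_degS_mono {k k' : ℕ} (hk : k' ≤ k) {S T : Finset V} (hST : S ⊆ T)
    (v : V) :
    #(univ.filter fun ℓ : L => k ≤ degS G S ℓ v) ≤
      #(univ.filter fun ℓ : L => k' ≤ degS G T ℓ v) :=
  card_le_card (monotone_filter_right _ fun ℓ _ hℓ => hk.trans (hℓ.trans (degS_mono G hST ℓ v)))

variable {G}

lemma FCProp.mono {k k' lam lam' : ℕ} (hk : k' ≤ k) (hlam : lam' ≤ lam) {S : Finset V}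
    (h : FCProp G k lam S) : FCProp G k' lam' S :=
  fun v hv => hlam.trans ((h v hv).trans (card_filter_le_degS_mono G hk subset_rfl v))

lemma FCProp.union [DecidableEq V] {k lam : ℕ} {S T : Finset V}
    (hS : FCProp G k lam S) (hT : FCProp G k lam T) : FCProp G k lam (S ∪ T) := by
  intro v hv
  rcases mem_union.1 hv with hvS | hvT
  · exact (hS v hvS).trans (card_filter_le_degS_mono G le_rfl subset_union_left v)
  · exact (hT v hvT).trans (card_filter_le_degS_mono G le_rfl subset_union_right v)

lemma IsFirmCore.subset_of_fcProp {k lam : ℕ} {C S : Finset V}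
    (hC : IsFirmCore G k lam C) (hS : FCProp G k lam S) : S ⊆ C := by
  classical
  rw [← hC.2 (C ∪ S) (hC.1.union hS) subset_union_left]
  exact subset_union_right

end FCProp

theorem firmcore_hierarchy_general {V L : Type*} [Fintype L] (G : L → SimpleGraph V)
    [∀ ℓ, DecidableRel (G ℓ).Adj]
    (k lam : ℕ)
    (C : Finset V) (hC : IsFirmCore G k lam C) :
    (∀ C₁ : Finset V, IsFirmCore G (k + 1) lam C₁ → C₁ ⊆ C) ∧
    (lam + 1 ≤ Fintype.card L →
      ∀ C₂ : Finset V, IsFirmCore G k (lam + 1) C₂ → C₂ ⊆ C) :=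
  ⟨fun _ h₁ => hC.subset_of_fcProp (h₁.1.mono k.le_succ le_rfl),
    fun _ _ h₂ => hC.subset_of_fcProp (h₂.1.mono le_rfl lam.le_succ)⟩

/-- Hierarchical structure of FirmCores: the `(k+1,λ)`-FirmCore and (when `λ+1 ≤ |L|`)
the `(k,λ+1)`-FirmCore are contained in the `(k,λ)`-FirmCore. -/
theorem firmcore_hierarchy {V L : Type*} [Fintype L] (G : L → SimpleGraph V)
    [∀ ℓ, DecidableRel (G ℓ).Adj]
    (k lam : ℕ) (hlam : 1 ≤ lam) (hlamL : lam ≤ Fintype.card L)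
    (C : Finset V) (hC : IsFirmCore G k lam C) :
    (∀ C₁ : Finset V, IsFirmCore G (k + 1) lam C₁ → C₁ ⊆ C) ∧
    (lam + 1 ≤ Fintype.card L →
      ∀ C₂ : Finset V, IsFirmCore G k (lam + 1) C₂ → C₂ ⊆ C) :=
  firmcore_hierarchy_general G k lam C hC
end

section
/- Uniqueness of FirmD-Core: for all integers k,r ≥ 0 and integer λ with 1 ≤ λ ≤ |L|, if (S₁,T₁) and (S₂,T₂) are both maximal pairs of subsets of V satisfying the (k,r,λ)-FirmD-Core property, then S₁ = S₂ and T₁ = T₂. (Equivalently: if (S₁,T₁) and (S₂,T₂) both satisfy the (k,r,λ)-FirmD-Core property, then so does (S₁∪S₂, T₁∪T₂); hence the maximal such pair is unique.) -/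
open Finset

/-- Number of out-neighbors of `v` inside `T`, in layer `ℓ`. -/
def dOut {V L : Type*} (D : L → V → V → Prop) [∀ ℓ, DecidableRel (D ℓ)]
    (ℓ : L) (T : Finset V) (v : V) : ℕ :=
  (T.filter fun u => D ℓ v u).card

/-- Number of in-neighbors of `u` inside `S`, in layer `ℓ`. -/
def dIn {V L : Type*} (D : L → V → V → Prop) [∀ ℓ, DecidableRel (D ℓ)]
    (ℓ : L) (S : Finset V) (u : V) : ℕ :=
  (S.filter fun v => D ℓ v u).card

/-- `(S,T)` satisfies the `(k,r,λ)`-FirmD-Core property: every `v ∈ S` has, in at least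
`λ` layers, at least `k` out-neighbors in `T`, and every `u ∈ T` has, in at least `λ`
layers, at least `r` in-neighbors in `S`. -/
def FDCProp {V L : Type*} [Fintype L] (D : L → V → V → Prop)
    [∀ ℓ, DecidableRel (D ℓ)] (k r lam : ℕ) (S T : Finset V) : Prop :=
  (∀ v ∈ S, lam ≤ (univ.filter fun ℓ : L => k ≤ dOut D ℓ T v).card) ∧
  (∀ u ∈ T, lam ≤ (univ.filter fun ℓ : L => r ≤ dIn D ℓ S u).card)

/-- `(S,T)` is the `(k,r,λ)`-FirmD-Core: it satisfies the FirmD-Core property and is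
maximal under componentwise inclusion among such pairs. -/
def IsFDC {V L : Type*} [Fintype L] (D : L → V → V → Prop)
    [∀ ℓ, DecidableRel (D ℓ)] (k r lam : ℕ) (S T : Finset V) : Prop :=
  FDCProp D k r lam S T ∧
    ∀ S' T' : Finset V, FDCProp D k r lam S' T' → S ⊆ S' → T ⊆ T' → S' = S ∧ T' = T

section FirmDCore

variable {V L : Type*} (D : L → V → V → Prop) [∀ ℓ, DecidableRel (D ℓ)]

theorem dOut_mono (ℓ : L) {T T' : Finset V} (h : T ⊆ T') (v : V) :
    dOut D ℓ T v ≤ dOut D ℓ T' v :=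
  card_le_card (filter_subset_filter _ h)

theorem dIn_mono (ℓ : L) {S S' : Finset V} (h : S ⊆ S') (u : V) :
    dIn D ℓ S u ≤ dIn D ℓ S' u :=
  card_le_card (filter_subset_filter _ h)

variable [Fintype L] [DecidableEq V] {D}

theorem FDCProp.union {k r lam : ℕ} {S₁ T₁ S₂ T₂ : Finset V}
    (h₁ : FDCProp D k r lam S₁ T₁) (h₂ : FDCProp D k r lam S₂ T₂) :
    FDCProp D k r lam (S₁ ∪ S₂) (T₁ ∪ T₂) := by
  have out_le {T T' : Finset V} (hT : T ⊆ T') (v : V) :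
      (univ.filter fun ℓ : L => k ≤ dOut D ℓ T v).card ≤
        (univ.filter fun ℓ : L => k ≤ dOut D ℓ T' v).card :=
    card_le_card <| monotone_filter_right _ fun ℓ _ hk => hk.trans (dOut_mono D ℓ hT v)
  have in_le {S S' : Finset V} (hS : S ⊆ S') (u : V) :
      (univ.filter fun ℓ : L => r ≤ dIn D ℓ S u).card ≤
        (univ.filter fun ℓ : L => r ≤ dIn D ℓ S' u).card :=
    card_le_card <| monotone_filter_right _ fun ℓ _ hr => hr.trans (dIn_mono D ℓ hS u)
  constructor
  · intro v hv
    rcases mem_union.mp hv with hv | hv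
    · exact (h₁.1 v hv).trans (out_le subset_union_left v)
    · exact (h₂.1 v hv).trans (out_le subset_union_right v)
  · intro u hu
    rcases mem_union.mp hu with hu | hu
    · exact (h₁.2 u hu).trans (in_le subset_union_left u)
    · exact (h₂.2 u hu).trans (in_le subset_union_right u)

theorem IsFDC.eq_union {k r lam : ℕ} {S₁ T₁ S₂ T₂ : Finset V}
    (h₁ : IsFDC D k r lam S₁ T₁) (h₂ : FDCProp D k r lam S₂ T₂) :
    S₁ ∪ S₂ = S₁ ∧ T₁ ∪ T₂ = T₁ :=
  h₁.2 _ _ (h₁.1.union h₂) subset_union_left subset_union_left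

end FirmDCore

theorem firmdcore_unique_general {V L : Type*} [Fintype L] (D : L → V → V → Prop)
    [∀ ℓ, DecidableRel (D ℓ)]
    (k r lam : ℕ)
    (S₁ T₁ S₂ T₂ : Finset V)
    (h₁ : IsFDC D k r lam S₁ T₁) (h₂ : IsFDC D k r lam S₂ T₂) :
    S₁ = S₂ ∧ T₁ = T₂ := by
  classical
  obtain ⟨hS₁, hT₁⟩ := h₁.eq_union h₂.1
  obtain ⟨hS₂, hT₂⟩ := h₂.eq_union h₁.1
  rw [union_comm] at hS₂ hT₂
  exact ⟨hS₁.symm.trans hS₂, hT₁.symm.trans hT₂⟩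

/-- Uniqueness of the `(k,r,λ)`-FirmD-Core. -/
theorem firmdcore_unique {V L : Type*} [Fintype L] (D : L → V → V → Prop)
    [∀ ℓ, DecidableRel (D ℓ)]
    (k r lam : ℕ) (hlam : 1 ≤ lam) (hlamL : lam ≤ Fintype.card L)
    (S₁ T₁ S₂ T₂ : Finset V)
    (h₁ : IsFDC D k r lam S₁ T₁) (h₂ : IsFDC D k r lam S₂ T₂) :
    S₁ = S₂ ∧ T₁ = T₂ :=
  firmdcore_unique_general D k r lam S₁ T₁ S₂ T₂ h₁ h₂
end

section
/- Iterated pigeonhole step in the FirmCore density bound: let C be a nonempty subset of V satisfying the (k,λ)-FirmCore property for integers k ≥ 0 and 1 ≤ λ ≤ |L|. Then for every integer j with 1 ≤ j ≤ λ there exists a set of layers L̃ ⊆ L with |L̃| = j such that for every ℓ ∈ L̃, |E_ℓ[C]| / |C| ≥ (λ − j + 1)·k / (2|L|). -/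
/-
Let `f ℓ` be the number of vertices of `C` having at least `k` neighbours in `C` in layer `ℓ`.
Double counting the FirmCore property gives `∑ ℓ, f ℓ ≥ λ|C|`. Since `f ℓ ≤ |C|`, fewer than `j`
layers with `f ℓ ≥ (λ - j + 1)|C|/|L|` would make this sum smaller than
`(j - 1)|C| + (λ - j + 1)|C| = λ|C|`. In each such layer the handshake lemma gives
`2|E_ℓ[C]| ≥ k · f ℓ`.
-/

open Finset

/-- Number of edges of the subgraph of layer `ℓ` induced by `S` (ordered pairs halved). -/
def edgeCount {V L : Type*} (G : L → SimpleGraph V) [∀ ℓ, DecidableRel (G ℓ).Adj]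
    (ℓ : L) (S : Finset V) : ℕ :=
  ((S ×ˢ S).filter fun p : V × V => (G ℓ).Adj p.1 p.2).card / 2

/-- The multilayer density `ρ(S) = max_{∅ ≠ L̂ ⊆ L} (min_{ℓ ∈ L̂} |E_ℓ[S]|/|S|) · |L̂|^β`. -/
noncomputable def mlDensity {V L : Type*} (G : L → SimpleGraph V)
    [∀ ℓ, DecidableRel (G ℓ).Adj] (β : ℝ) (S : Finset V) : ℝ :=
  sSup { x : ℝ | ∃ Lh : Finset L, Lh.Nonempty ∧
    x = sInf { y : ℝ | ∃ ℓ ∈ Lh, y = (edgeCount G ℓ S : ℝ) / (S.card : ℝ) } *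
      (Lh.card : ℝ) ^ β }

theorem Finset.le_card_filter_le_of_nsmul_add_nsmul_le_sum {ι M : Type*} [AddCommMonoid M]
    [LinearOrder M] [IsOrderedCancelAddMonoid M] {s : Finset ι} {f : ι → M} {a b : M} {j : ℕ}
    (ha : 0 ≤ a) (hb : 0 ≤ b) (hf : ∀ i ∈ s, f i ≤ a) (hj : j ≤ #s)
    (hsum : (j - 1) • a + #s • b ≤ ∑ i ∈ s, f i) :
    j ≤ #{i ∈ s | b ≤ f i} := by
  by_contra! hlt
  have hsplit := card_filter_add_card_filter_not (s := s) (b ≤ f ·)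
  have hbad : {i ∈ s | ¬b ≤ f i}.Nonempty := card_pos.1 (by omega)
  refine (hsum.trans_lt ?_).false
  calc ∑ i ∈ s, f i = ∑ i ∈ s with b ≤ f i, f i + ∑ i ∈ s with ¬b ≤ f i, f i :=
        (sum_filter_add_sum_filter_not s _ f).symm
    _ < #{i ∈ s | b ≤ f i} • a + #{i ∈ s | ¬b ≤ f i} • b := by
        refine add_lt_add_of_le_of_lt
          (sum_le_card_nsmul _ _ _ fun i hi => hf i (mem_filter.1 hi).1) ?_
        rw [← sum_const]
        exact sum_lt_sum_of_nonempty hbad fun i hi => not_le.1 (mem_filter.1 hi).2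
    _ ≤ (j - 1) • a + #s • b :=
        add_le_add (nsmul_le_nsmul_left ha (by omega)) (nsmul_le_nsmul_left hb (by omega))

theorem Finset.even_card_of_involution {α : Type*} (s : Finset α) (g : α → α)
    (hg : ∀ a ∈ s, g a ∈ s) (hinv : ∀ a ∈ s, g (g a) = a) (hfix : ∀ a ∈ s, g a ≠ a) :
    Even #s := by
  rw [← ZMod.natCast_eq_zero_iff_even, card_eq_sum_ones, Nat.cast_sum, Nat.cast_one]
  exact sum_involution (fun a _ => g a) (fun _ _ => by decide) (fun a ha _ => hfix a ha) hg hinv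

section Multilayer

variable {V L : Type*} (G : L → SimpleGraph V) [∀ ℓ, DecidableRel (G ℓ).Adj]

lemma card_adjPairs_eq_sum_degS (ℓ : L) (S : Finset V) :
    #{p ∈ S ×ˢ S | (G ℓ).Adj p.1 p.2} = ∑ v ∈ S, degS G S ℓ v := by
  simp only [card_filter, sum_product, degS]

lemma even_card_adjPairs (ℓ : L) (S : Finset V) : Even #{p ∈ S ×ˢ S | (G ℓ).Adj p.1 p.2} :=
  even_card_of_involution _ Prod.swap
    (fun p hp => by
      rw [mem_filter, mem_product] at hp ⊢
      exact ⟨hp.1.symm, hp.2.symm⟩)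
    (fun p _ => p.swap_swap)
    (fun p hp hswap => (G ℓ).ne_of_adj (mem_filter.1 hp).2 (congrArg Prod.snd hswap))

lemma two_mul_edgeCount (ℓ : L) (S : Finset V) :
    2 * edgeCount G ℓ S = ∑ v ∈ S, degS G S ℓ v := by
  rw [edgeCount, Nat.two_mul_div_two_of_even (even_card_adjPairs G ℓ S),
    card_adjPairs_eq_sum_degS]

lemma mul_card_filter_le_two_mul_edgeCount (ℓ : L) (S : Finset V) (k : ℕ) :
    k * #{v ∈ S | k ≤ degS G S ℓ v} ≤ 2 * edgeCount G ℓ S := by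
  rw [two_mul_edgeCount, mul_comm, ← smul_eq_mul]
  exact (card_nsmul_le_sum _ _ _ fun v hv => (mem_filter.1 hv).2).trans
    (sum_le_sum_of_subset (filter_subset _ _))

lemma FCProp.mul_card_le_sum_card_filter [Fintype L] {k lam : ℕ} {S : Finset V}
    (h : FCProp G k lam S) : lam * #S ≤ ∑ ℓ, #{v ∈ S | k ≤ degS G S ℓ v} := by
  calc lam * #S = ∑ _v ∈ S, lam := by rw [sum_const, smul_eq_mul, mul_comm]
    _ ≤ ∑ v ∈ S, #{ℓ | k ≤ degS G S ℓ v} := sum_le_sum h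
    _ = ∑ ℓ, #{v ∈ S | k ≤ degS G S ℓ v} := by simp only [card_filter]; exact sum_comm

end Multilayer

theorem firmcore_pigeonhole_step_general {V L : Type*} [Fintype L] (G : L → SimpleGraph V)
    [∀ ℓ, DecidableRel (G ℓ).Adj]
    (k lam : ℕ) (hlamL : lam ≤ Fintype.card L)
    (C : Finset V) (hC : C.Nonempty) (h : FCProp G k lam C) :
    ∀ j : ℕ, 1 ≤ j → j ≤ lam → ∃ Lt : Finset L, Lt.card = j ∧
      ∀ ℓ ∈ Lt,
        ((lam : ℝ) - (j : ℝ) + 1) * (k : ℝ) / (2 * (Fintype.card L : ℝ)) ≤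
          (edgeCount G ℓ C : ℝ) / (C.card : ℝ) := by
  intro j hj1 hjlam
  set f : L → ℕ := fun ℓ => #{v ∈ C | k ≤ degS G C ℓ v}
  have hCpos : (0 : ℝ) < #C := Nat.cast_pos.2 hC.card_pos
  have hL : (0 : ℝ) < Fintype.card L := Nat.cast_pos.2 (by omega)
  have hlamj : (0 : ℝ) ≤ lam - j + 1 := by
    have : (j : ℝ) ≤ lam := by exact_mod_cast hjlam
    linarith
  have hgood : j ≤ #{ℓ | (lam - j + 1) * #C / Fintype.card L ≤ (f ℓ : ℝ)} := by
    refine le_card_filter_le_of_nsmul_add_nsmul_le_sum (a := (#C : ℝ)) hCpos.le (by positivity)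
      (fun ℓ _ => Nat.cast_le.2 (card_filter_le _ _)) (by rw [card_univ]; omega) ?_
    have hsum : (lam * #C : ℝ) ≤ ∑ ℓ, (f ℓ : ℝ) := by
      exact_mod_cast h.mul_card_le_sum_card_filter
    rw [nsmul_eq_mul, nsmul_eq_mul, card_univ, Nat.cast_sub hj1, mul_div_cancel₀ _ hL.ne']
    push_cast
    linarith
  obtain ⟨Lt, hsub, hcard⟩ := exists_subset_card_eq hgood
  refine ⟨Lt, hcard, fun ℓ hℓ => ?_⟩
  have hthr := (div_le_iff₀ hL).1 (mem_filter.1 (hsub hℓ)).2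
  have hdeg : (k * f ℓ : ℝ) ≤ 2 * edgeCount G ℓ C := by
    exact_mod_cast mul_card_filter_le_two_mul_edgeCount G ℓ C k
  rw [div_le_div_iff₀ (by positivity) hCpos]
  calc ((lam : ℝ) - j + 1) * k * #C = k * ((lam - j + 1) * #C) := by ring
    _ ≤ k * (f ℓ * Fintype.card L) := by gcongr
    _ = k * f ℓ * Fintype.card L := by ring
    _ ≤ 2 * edgeCount G ℓ C * Fintype.card L := by gcongr
    _ = edgeCount G ℓ C * (2 * Fintype.card L) := by ring

/-- Iterated pigeonhole step: if `C` satisfies the `(k,λ)`-FirmCore property, then for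
every `1 ≤ j ≤ λ` there are `j` layers in each of which the induced edge density of `C`
is at least `(λ - j + 1)·k / (2|L|)`. -/
theorem firmcore_pigeonhole_step {V L : Type*} [Fintype L] (G : L → SimpleGraph V)
    [∀ ℓ, DecidableRel (G ℓ).Adj]
    (k lam : ℕ) (hlam : 1 ≤ lam) (hlamL : lam ≤ Fintype.card L)
    (C : Finset V) (hC : C.Nonempty) (h : FCProp G k lam C) :
    ∀ j : ℕ, 1 ≤ j → j ≤ lam → ∃ Lt : Finset L, Lt.card = j ∧
      ∀ ℓ ∈ Lt,
        ((lam : ℝ) - (j : ℝ) + 1) * (k : ℝ) / (2 * (Fintype.card L : ℝ)) ≤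
          (edgeCount G ℓ C : ℝ) / (C.card : ℝ) :=
  firmcore_pigeonhole_step_general G k lam hlamL C hC h
end
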